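/- arXiv:1203.3237 — 3 statements merged into one kernel-verified Lean document; each statement's English description precedes it below -/
import Mathlib

section
/- (Z-property for cosets) Let W be a Coxeter group, J ⊆ S, σ, τ ∈ W/W_J, and s a simple reflection with sσ ≤ σ and sτ ≤ τ (in the Bruhat order on W/W_J). Then σ ≤ τ if and only if sσ ≤ τ, if and only if sσ ≤ sτ. -/
namespace KMChev

open CoxeterSystem

variable {B W : Type*} [Group W] {M : CoxeterMatrix B}

/-- Bruhat covering relation: `w = v t` for a reflection `t` and `ℓ(w) = ℓ(v) + 1`. -/
def BruhatCov (cs : CoxeterSystem M W) (v w : W) : Prop :=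
  (∃ t : W, cs.IsReflection t ∧ w = v * t) ∧ cs.length w = cs.length v + 1

/-- The (strong) Bruhat order on a Coxeter group. -/
def BruhatLE (cs : CoxeterSystem M W) : W → W → Prop :=
  Relation.ReflTransGen (BruhatCov cs)

/-- Strict Bruhat order. -/
def BruhatLT (cs : CoxeterSystem M W) (v w : W) : Prop :=
  BruhatLE cs v w ∧ v ≠ w

/-- The standard parabolic subgroup `W_J` generated by the simple reflections in `J`. -/
def WJ (cs : CoxeterSystem M W) (J : Set B) : Subgroup W :=
  Subgroup.closure (cs.simple '' J)

/-- The set `W^J` of minimal length coset representatives: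
`w` with `ℓ(w s_j) > ℓ(w)` for all `j ∈ J`. -/
def MinRep (cs : CoxeterSystem M W) (J : Set B) : Set W :=
  {w : W | ∀ j ∈ J, cs.length w < cs.length (w * cs.simple j)}

/-- The Bruhat order on `W/W_J`, transported from `W^J` via `w ↦ w W_J`. -/
def CosetLE (cs : CoxeterSystem M W) (J : Set B) (σ τ : W ⧸ WJ cs J) : Prop :=
  ∃ v w : W, v ∈ MinRep cs J ∧ w ∈ MinRep cs J ∧
    (QuotientGroup.mk v : W ⧸ WJ cs J) = σ ∧ (QuotientGroup.mk w : W ⧸ WJ cs J) = τ ∧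
    BruhatLE cs v w

/-- Strict Bruhat order on `W/W_J`. -/
def CosetLT (cs : CoxeterSystem M W) (J : Set B) (σ τ : W ⧸ WJ cs J) : Prop :=
  CosetLE cs J σ τ ∧ σ ≠ τ

end KMChev

/-!
In `W` the Z-property is a consequence of the lifting property: for a simple reflection `s`, the
maps `w ↦ min(w, s w)` and `w ↦ max(w, s w)` are monotone for the Bruhat order. It suffices to
check this on a cover `v ⋖ w = v t`, where the only nontrivial case (`s v > v`, `s w < w`) forces
`s v = w` by the strong exchange condition, which comes from Tits' cocycle on `W × ZMod 2`.

For cosets one compares the minimal representatives `u` of `σ` and `x` of `τ`. By Deodhar's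
lemma the hypothesis `sσ ≤ σ` leaves two cases: either `s u < u` and `s u` represents `sσ`, or
`s u = u s_j` with `j ∈ J` and `sσ = σ`. When both cosets are in the first case the claim is the
Z-property in `W`; the mixed cases follow from the lifting property, used on the left and, for
`x s_j`, on the right.
-/

namespace KMChev

open CoxeterSystem Finset

variable {B W : Type*} [Group W] {M : CoxeterMatrix B} (cs : CoxeterSystem M W)

section InversionParity

open scoped Classical

theorem mul_mul_inv_eq_iff (g t a : W) : g * t * g⁻¹ = a ↔ t = g⁻¹ * a * g := by
  constructor <;> rintro rfl <;> group

def twistConj (p : W) (c : W → ZMod 2) : Function.End (W × ZMod 2) :=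
  fun x ↦ (p * x.1 * p⁻¹, x.2 + c x.1)

theorem twistConj_mul (p q : W) (c d : W → ZMod 2) :
    twistConj p c * twistConj q d = twistConj (p * q) (fun t ↦ d t + c (q * t * q⁻¹)) := by
  funext x
  change (p * (q * x.1 * q⁻¹) * p⁻¹, x.2 + d x.1 + c (q * x.1 * q⁻¹)) =
    (p * q * x.1 * (p * q)⁻¹, x.2 + (d x.1 + c (q * x.1 * q⁻¹)))
  rw [add_assoc]
  congr 1
  group

theorem twistConj_one_zero : twistConj (1 : W) (fun _ ↦ 0) = 1 := by
  funext x
  simp [twistConj, Function.End.one_def]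

theorem twistConj_pow (p : W) (c : W → ZMod 2) (k : ℕ) :
    twistConj p c ^ k = twistConj (p ^ k) (fun t ↦ ∑ l ∈ range k, c (p ^ l * t * (p ^ l)⁻¹)) := by
  induction k with
  | zero => simpa using twistConj_one_zero.symm
  | succ k ih =>
    rw [pow_succ, ih, twistConj_mul, ← pow_succ]
    congr 1
    funext t
    rw [sum_range_succ', add_comm]
    simp only [pow_succ, pow_zero, one_mul, inv_one, mul_one, mul_inv_rev, mul_assoc]

theorem sum_range_two_mul_eq_zero_of_periodic (f : ℕ → ZMod 2) (m : ℕ)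
    (hf : ∀ l, f (m + l) = f l) : ∑ l ∈ range (2 * m), f l = 0 := by
  rw [two_mul, sum_range_add]
  simp only [hf, CharTwo.add_self_eq_zero]

theorem sum_range_two_mul (f : ℕ → ZMod 2) (m : ℕ) :
    ∑ l ∈ range (2 * m), f l = ∑ l ∈ range m, (f (2 * l) + f (2 * l + 1)) := by
  induction m with
  | zero => simp
  | succ m ih => rw [mul_add_one, sum_range_succ, sum_range_succ, sum_range_succ, ih, add_assoc]

noncomputable def simpleTwist (i : B) : Function.End (W × ZMod 2) :=
  twistConj (cs.simple i) (fun t ↦ if t = cs.simple i then 1 else 0)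

theorem isLiftable_simpleTwist : M.IsLiftable (simpleTwist cs) := by
  intro i i'
  set p := cs.simple i * cs.simple i'
  have hconj (l : ℕ) : (p ^ l)⁻¹ * cs.simple i' = cs.simple i' * p ^ l := by
    have : SemiconjBy (cs.simple i') p p⁻¹ := by simp [SemiconjBy, p, mul_assoc]
    rw [(this.pow_right l).eq, inv_pow]
  have heven (t : W) (l : ℕ) :
      p ^ l * t * (p ^ l)⁻¹ = cs.simple i' ↔ t = cs.simple i' * p ^ (2 * l) := by
    rw [mul_mul_inv_eq_iff, hconj, mul_assoc, ← pow_add, two_mul]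
  have hodd (t : W) (l : ℕ) : cs.simple i' * (p ^ l * t * (p ^ l)⁻¹) * (cs.simple i')⁻¹ =
      cs.simple i ↔ t = cs.simple i' * p ^ (2 * l + 1) := by
    have : (cs.simple i')⁻¹ * cs.simple i * cs.simple i' = cs.simple i' * p := by
      simp [p, mul_assoc]
    rw [mul_mul_inv_eq_iff, this, mul_mul_inv_eq_iff, ← mul_assoc, hconj, mul_assoc,
      mul_assoc, ← pow_succ', ← pow_add, show l + (l + 1) = 2 * l + 1 by ring]
  -- Both indicators pick out reflections `s_{i'} p ^ k` of the dihedral subgroup; as `k` runs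
  -- over `range (2 * M i i')` each of them is hit an even number of times since `p ^ M i i' = 1`.
  have hsum (t : W) : ∑ l ∈ range (M i i'),
      ((if p ^ l * t * (p ^ l)⁻¹ = cs.simple i' then 1 else 0) +
        if cs.simple i' * (p ^ l * t * (p ^ l)⁻¹) * (cs.simple i')⁻¹ = cs.simple i then 1 else 0)
      = (0 : ZMod 2) := by
    simp only [heven, hodd]
    rw [← sum_range_two_mul (fun k ↦ if t = cs.simple i' * p ^ k then 1 else 0)]
    apply sum_range_two_mul_eq_zero_of_periodic
    intro l
    rw [pow_add, cs.simple_mul_simple_pow, one_mul]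
  rw [simpleTwist, simpleTwist, twistConj_mul, twistConj_pow, cs.simple_mul_simple_pow]
  convert twistConj_one_zero (W := W) using 2
  funext t
  exact hsum t

theorem twistConj_injective (p : W) : Function.Injective (twistConj p) := by
  intro c d h
  funext t
  simpa [twistConj] using congrArg Prod.snd (congrFun h (t, 0))

noncomputable def twistRep : W →* Function.End (W × ZMod 2) :=
  cs.lift ⟨simpleTwist cs, isLiftable_simpleTwist cs⟩

theorem exists_twistRep_eq (w : W) : ∃ c, twistRep cs w = twistConj w c := by
  induction w using cs.simple_induction_left with
  | one => exact ⟨fun _ ↦ 0, by rw [map_one]; exact twistConj_one_zero.symm⟩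
  | mul_simple_left w i ih =>
    obtain ⟨c, hc⟩ := ih
    rw [map_mul, hc, twistRep, cs.lift_apply_simple, simpleTwist, twistConj_mul]
    exact ⟨_, rfl⟩

/-- Tits' trick: reading the parity off the homomorphism `twistRep` makes it independent of the
word chosen for `w` in `invParity_wordProd`. -/
noncomputable def invParity (w : W) : W → ZMod 2 :=
  (exists_twistRep_eq cs w).choose

theorem twistRep_eq (w : W) : twistRep cs w = twistConj w (invParity cs w) :=
  (exists_twistRep_eq cs w).choose_spec

theorem invParity_mul (a b t : W) :
    invParity cs (a * b) t = invParity cs b t + invParity cs a (b * t * b⁻¹) := by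
  have h := twistRep_eq cs (a * b)
  rw [map_mul, twistRep_eq, twistRep_eq, twistConj_mul] at h
  exact congrFun (twistConj_injective _ h).symm t

theorem invParity_simple (i : B) (t : W) :
    invParity cs (cs.simple i) t = if t = cs.simple i then 1 else 0 := by
  have h := twistRep_eq cs (cs.simple i)
  rw [twistRep, cs.lift_apply_simple] at h
  exact congrFun (twistConj_injective _ h).symm t

theorem invParity_one (t : W) : invParity cs 1 t = 0 := by
  have h := twistRep_eq cs 1
  rw [map_one, ← twistConj_one_zero] at h
  exact congrFun (twistConj_injective _ h).symm t

theorem invParity_wordProd (ω : List B) (t : W) :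
    invParity cs (cs.wordProd ω) t = (cs.rightInvSeq ω).count t := by
  induction ω with
  | nil => simp [invParity_one]
  | cons i ω ih =>
    rw [cs.wordProd_cons, invParity_mul, invParity_simple, ih, rightInvSeq, List.count_cons,
      mul_mul_inv_eq_iff]
    simp only [beq_iff_eq, @eq_comm W t]
    push_cast
    rfl

theorem invParity_inv (w t : W) : invParity cs w⁻¹ (w * t * w⁻¹) = invParity cs w t := by
  have h := invParity_mul cs w⁻¹ w t
  rw [inv_mul_cancel, invParity_one] at h
  rw [← sub_eq_zero, CharTwo.sub_eq_add, add_comm, h]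

theorem invParity_self {t : W} (ht : cs.IsReflection t) : invParity cs t t = 1 := by
  obtain ⟨u, i, rfl⟩ := ht
  have h₁ : u⁻¹ * (u * cs.simple i * u⁻¹) * u⁻¹⁻¹ = cs.simple i := by group
  have h₂ : cs.simple i * cs.simple i * (cs.simple i)⁻¹ = cs.simple i := by group
  rw [invParity_mul, invParity_mul, h₁, h₂, invParity_simple, if_pos rfl, invParity_inv,
    add_left_comm, CharTwo.add_self_eq_zero, add_zero]

theorem mem_rightInvSeq_of_invParity_eq_one {ω : List B} {t : W}
    (h : invParity cs (cs.wordProd ω) t = 1) : t ∈ cs.rightInvSeq ω := by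
  rw [invParity_wordProd] at h
  refine List.count_pos_iff.mp (Nat.pos_of_ne_zero fun h0 ↦ ?_)
  rw [h0, Nat.cast_zero] at h
  exact zero_ne_one h

theorem isRightInversion_of_invParity_eq_one {w t : W} (h : invParity cs w t = 1) :
    cs.IsRightInversion w t := by
  obtain ⟨ω, hω, rfl⟩ := cs.exists_isReduced w
  exact cs.isRightInversion_of_mem_rightInvSeq hω (mem_rightInvSeq_of_invParity_eq_one cs h)

theorem invParity_eq_one_of_isRightInversion {w t : W} (h : cs.IsRightInversion w t) :
    invParity cs w t = 1 := by
  by_contra hne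
  have h0 : invParity cs w t = 0 := (by decide : ∀ x : ZMod 2, x ≠ 1 → x = 0) _ hne
  have hwt : cs.IsRightInversion (w * t) t := by
    refine isRightInversion_of_invParity_eq_one cs ?_
    rw [invParity_mul, invParity_self cs h.1, mul_inv_cancel_right, h0, add_zero]
  have := hwt.2
  rw [mul_assoc, h.1.mul_self, mul_one] at this
  exact lt_asymm h.2 this

/-- The strong exchange condition. -/
theorem exists_eraseIdx_of_isRightInversion {ω : List B} {t : W}
    (h : cs.IsRightInversion (cs.wordProd ω) t) :
    ∃ j < ω.length, cs.wordProd ω * t = cs.wordProd (ω.eraseIdx j) := by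
  have hmem := mem_rightInvSeq_of_invParity_eq_one cs (invParity_eq_one_of_isRightInversion cs h)
  obtain ⟨j, hj, rfl⟩ := List.getElem_of_mem hmem
  refine ⟨j, by simpa using hj, ?_⟩
  rw [← cs.wordProd_mul_getD_rightInvSeq, List.getD_eq_getElem]

end InversionParity

section Exchange

theorem exists_sublist_isReduced (ω : List B) :
    ∃ ω', ω'.Sublist ω ∧ cs.IsReduced ω' ∧ cs.wordProd ω' = cs.wordProd ω := by
  induction ω using List.reverseRecOn with
  | nil => exact ⟨[], List.Sublist.refl _, by simp [CoxeterSystem.IsReduced], rfl⟩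
  | append_singleton ω i ih =>
    obtain ⟨ω', hsub, hred, hprod⟩ := ih
    rw [cs.wordProd_append, cs.wordProd_singleton, ← hprod]
    rcases cs.length_mul_simple (cs.wordProd ω') i with hlen | hlen
    · refine ⟨ω' ++ [i], hsub.append (List.Sublist.refl _), ?_, ?_⟩
      · rw [CoxeterSystem.IsReduced, cs.wordProd_append, cs.wordProd_singleton, hlen, hred,
          List.length_append, List.length_singleton]
      · rw [cs.wordProd_append, cs.wordProd_singleton]
    · obtain ⟨j, hj, heq⟩ := exists_eraseIdx_of_isRightInversion cs (ω := ω')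
        ⟨cs.isReflection_simple i, by omega⟩
      refine ⟨ω'.eraseIdx j, ((ω'.eraseIdx_sublist j).trans hsub).trans
        (List.sublist_append_left ω [i]), ?_, heq.symm⟩
      rw [CoxeterSystem.IsReduced, ← heq, List.length_eraseIdx_of_lt hj, ← hred]
      omega

/-- Strong exchange in the reduced word `i :: ω` of `w`: deleting any letter other than the first
would make `s_i w t` shorter than `w t`. -/
theorem mul_eq_simple_mul_of_not_isLeftDescent_mul {w t : W} {i : B} (ht : cs.IsReflection t)
    (hlen : cs.length (w * t) + 1 = cs.length w) (hw : cs.IsLeftDescent w i)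
    (hwt : ¬ cs.IsLeftDescent (w * t) i) : w * t = cs.simple i * w := by
  obtain ⟨ω, hω, hωw⟩ := cs.exists_isReduced (cs.simple i * w)
  have hw' : cs.wordProd (i :: ω) = w := by
    rw [cs.wordProd_cons, ← hωw, simple_mul_simple_cancel_left]
  rw [cs.isLeftDescent_iff, hωw, hω] at hw
  obtain ⟨j, hj, heq⟩ := exists_eraseIdx_of_isRightInversion cs (ω := i :: ω) (t := t)
    ⟨ht, by rw [hw']; omega⟩
  rw [hw'] at heq
  rcases j with _ | k
  · rwa [List.eraseIdx_cons_zero, ← hωw] at heq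
  · rw [List.eraseIdx_cons_succ, cs.wordProd_cons] at heq
    have hsw : cs.simple i * (w * t) = cs.wordProd (ω.eraseIdx k) := by
      rw [heq, ← mul_assoc, simple_mul_simple_self, one_mul]
    have hle := cs.length_wordProd_le (ω.eraseIdx k)
    rw [List.length_eraseIdx_of_lt (by simpa using hj), ← hsw] at hle
    rw [cs.not_isLeftDescent_iff] at hwt
    omega

end Exchange

section BruhatOrder

variable {cs}

theorem length_le_of_bruhatLE {v w : W} (h : BruhatLE cs v w) : cs.length v ≤ cs.length w := by
  induction h with
  | refl => rfl
  | tail _ hcov ih => exact ih.trans (hcov.2 ▸ Nat.le_succ _)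

theorem bruhatCov_simple_mul {v : W} {i : B} (h : ¬ cs.IsLeftDescent v i) :
    BruhatCov cs v (cs.simple i * v) :=
  ⟨⟨v⁻¹ * cs.simple i * v, ⟨v⁻¹, i, by group⟩, by group⟩, cs.not_isLeftDescent_iff.mp h⟩

theorem bruhatCov_simple_mul_of_isLeftDescent {w : W} {i : B} (h : cs.IsLeftDescent w i) :
    BruhatCov cs (cs.simple i * w) w := by
  simpa using bruhatCov_simple_mul (cs.isLeftDescent_iff_not_isLeftDescent_mul.mp h)

theorem BruhatCov.simple_mul {v w : W} (h : BruhatCov cs v w) {i : B}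
    (hlen : cs.length (cs.simple i * w) = cs.length (cs.simple i * v) + 1) :
    BruhatCov cs (cs.simple i * v) (cs.simple i * w) := by
  obtain ⟨⟨t, ht, rfl⟩, -⟩ := h
  exact ⟨⟨t, ht, (mul_assoc _ _ _).symm⟩, hlen⟩

theorem BruhatCov.inv {v w : W} (h : BruhatCov cs v w) : BruhatCov cs v⁻¹ w⁻¹ := by
  obtain ⟨⟨t, ht, rfl⟩, hlen⟩ := h
  refine ⟨⟨v * t * v⁻¹, ht.conj v, ?_⟩, by rwa [cs.length_inv, cs.length_inv]⟩
  rw [mul_inv_rev, ht.inv]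
  group

theorem BruhatLE.inv {v w : W} (h : BruhatLE cs v w) : BruhatLE cs v⁻¹ w⁻¹ := by
  induction h with
  | refl => exact .refl
  | tail _ hcov ih => exact ih.tail hcov.inv

variable (cs) in
open scoped Classical in
noncomputable def minSimpleMul (i : B) (w : W) : W :=
  if cs.IsLeftDescent w i then cs.simple i * w else w

variable (cs) in
open scoped Classical in
noncomputable def maxSimpleMul (i : B) (w : W) : W :=
  if cs.IsLeftDescent w i then w else cs.simple i * w

theorem minSimpleMul_of_isLeftDescent {w : W} {i : B} (h : cs.IsLeftDescent w i) :
    minSimpleMul cs i w = cs.simple i * w := if_pos h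

theorem minSimpleMul_of_not_isLeftDescent {w : W} {i : B} (h : ¬ cs.IsLeftDescent w i) :
    minSimpleMul cs i w = w := if_neg h

theorem maxSimpleMul_of_isLeftDescent {w : W} {i : B} (h : cs.IsLeftDescent w i) :
    maxSimpleMul cs i w = w := if_pos h

theorem maxSimpleMul_of_not_isLeftDescent {w : W} {i : B} (h : ¬ cs.IsLeftDescent w i) :
    maxSimpleMul cs i w = cs.simple i * w := if_neg h

theorem maxSimpleMul_simple_mul (i : B) (w : W) :
    maxSimpleMul cs i (cs.simple i * w) = maxSimpleMul cs i w := by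
  by_cases h : cs.IsLeftDescent w i
  · rw [maxSimpleMul_of_not_isLeftDescent (cs.isLeftDescent_iff_not_isLeftDescent_mul.mp h),
      simple_mul_simple_cancel_left, maxSimpleMul_of_isLeftDescent h]
  · rw [maxSimpleMul_of_isLeftDescent (cs.isLeftDescent_iff_not_isLeftDescent_mul.mpr
      (by rwa [simple_mul_simple_cancel_left])), maxSimpleMul_of_not_isLeftDescent h]

theorem BruhatCov.minSimpleMul_maxSimpleMul {v w : W} (h : BruhatCov cs v w) (i : B) :
    BruhatLE cs (minSimpleMul cs i v) (minSimpleMul cs i w) ∧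
      BruhatLE cs (maxSimpleMul cs i v) (maxSimpleMul cs i w) := by
  obtain ⟨⟨t, ht, hvt⟩, hlen⟩ := id h
  by_cases hv : cs.IsLeftDescent v i <;> by_cases hw : cs.IsLeftDescent w i <;>
    simp only [minSimpleMul, maxSimpleMul, hv, hw, if_true, if_false]
  · have hsimple : cs.length (cs.simple i * w) = cs.length (cs.simple i * v) + 1 := by
      rw [cs.isLeftDescent_iff] at hv hw
      omega
    exact ⟨.single (h.simple_mul hsimple), .single h⟩
  · exact ⟨.head (bruhatCov_simple_mul_of_isLeftDescent hv) (.single h),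
      .tail (.single h) (bruhatCov_simple_mul hw)⟩
  · have hwt : w * t = v := by rw [hvt, mul_assoc, ht.mul_self, mul_one]
    have := mul_eq_simple_mul_of_not_isLeftDescent_mul cs ht (by rw [hwt]; omega) hw (hwt ▸ hv)
    rw [hwt] at this
    rw [this, simple_mul_simple_cancel_left]
    exact ⟨.refl, .refl⟩
  · have hsimple : cs.length (cs.simple i * w) = cs.length (cs.simple i * v) + 1 := by
      rw [cs.not_isLeftDescent_iff] at hv hw
      omega
    exact ⟨.single h, .single (h.simple_mul hsimple)⟩

/-- The lifting property of the Bruhat order. -/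
theorem BruhatLE.minSimpleMul_maxSimpleMul {v w : W} (h : BruhatLE cs v w) (i : B) :
    BruhatLE cs (minSimpleMul cs i v) (minSimpleMul cs i w) ∧
      BruhatLE cs (maxSimpleMul cs i v) (maxSimpleMul cs i w) := by
  induction h with
  | refl => exact ⟨.refl, .refl⟩
  | tail _ hcov ih =>
    have hcov' := hcov.minSimpleMul_maxSimpleMul i
    exact ⟨ih.1.trans hcov'.1, ih.2.trans hcov'.2⟩

theorem bruhatLE_iff_simple_mul_le {v w : W} {i : B} (hv : cs.IsLeftDescent v i)
    (hw : cs.IsLeftDescent w i) : BruhatLE cs v w ↔ BruhatLE cs (cs.simple i * v) w := by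
  refine ⟨(Relation.ReflTransGen.single (bruhatCov_simple_mul_of_isLeftDescent hv)).trans,
    fun h ↦ ?_⟩
  simpa only [maxSimpleMul_simple_mul, maxSimpleMul_of_isLeftDescent hv,
    maxSimpleMul_of_isLeftDescent hw] using (h.minSimpleMul_maxSimpleMul i).2

theorem bruhatLE_iff_simple_mul_le_simple_mul {v w : W} {i : B} (hv : cs.IsLeftDescent v i)
    (hw : cs.IsLeftDescent w i) :
    BruhatLE cs v w ↔ BruhatLE cs (cs.simple i * v) (cs.simple i * w) := by
  refine ⟨fun h ↦ ?_, fun h ↦ ?_⟩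
  · simpa only [minSimpleMul_of_isLeftDescent hv, minSimpleMul_of_isLeftDescent hw] using
      (h.minSimpleMul_maxSimpleMul i).1
  · simpa only [maxSimpleMul_simple_mul, maxSimpleMul_of_isLeftDescent hv,
      maxSimpleMul_of_isLeftDescent hw] using (h.minSimpleMul_maxSimpleMul i).2

theorem bruhatLE_simple_mul_iff {v w : W} {i : B} (hv : ¬ cs.IsLeftDescent v i)
    (hw : cs.IsLeftDescent w i) : BruhatLE cs v (cs.simple i * w) ↔ BruhatLE cs v w := by
  refine ⟨fun h ↦ h.tail (bruhatCov_simple_mul_of_isLeftDescent hw), fun h ↦ ?_⟩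
  simpa only [minSimpleMul_of_not_isLeftDescent hv, minSimpleMul_of_isLeftDescent hw] using
    (h.minSimpleMul_maxSimpleMul i).1

theorem BruhatLE.mul_simple {v w : W} {j : B} (h : BruhatLE cs v w)
    (hv : ¬ cs.IsRightDescent v j) (hw : cs.IsRightDescent w j) :
    BruhatLE cs v (w * cs.simple j) := by
  rw [← cs.isLeftDescent_inv_iff] at hv hw
  simpa [cs.inv_simple] using ((bruhatLE_simple_mul_iff hv hw).mpr h.inv).inv

theorem BruhatLE.simple_mul_of_simple_mul_le {v w : W} {i : B}
    (h : BruhatLE cs (cs.simple i * v) w) (hv : cs.IsLeftDescent v i)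
    (hw : ¬ cs.IsLeftDescent w i) : BruhatLE cs v (cs.simple i * w) := by
  simpa only [maxSimpleMul_simple_mul, maxSimpleMul_of_isLeftDescent hv,
    maxSimpleMul_of_not_isLeftDescent hw] using (h.minSimpleMul_maxSimpleMul i).2

theorem not_isLeftDescent_of_simple_mul_eq {u : W} {i j : B} (hu : ¬ cs.IsRightDescent u j)
    (h : cs.simple i * u = u * cs.simple j) : ¬ cs.IsLeftDescent u i := by
  rwa [CoxeterSystem.IsLeftDescent, h]

theorem bruhatLE_of_simple_mul_le {u x : W} {i j : B} (hu : ¬ cs.IsRightDescent u j)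
    (hx : ¬ cs.IsRightDescent x j) (hxj : cs.simple i * x = x * cs.simple j)
    (hui : cs.IsLeftDescent u i) (h : BruhatLE cs (cs.simple i * u) x) : BruhatLE cs u x := by
  have h' := h.simple_mul_of_simple_mul_le hui (not_isLeftDescent_of_simple_mul_eq hx hxj)
  rw [hxj] at h'
  simpa using h'.mul_simple hu
    (cs.isRightDescent_iff_not_isRightDescent_mul.mpr (by rwa [simple_mul_simple_cancel_right]))

end BruhatOrder

section MinimalCosetRepresentatives

variable {cs} {J : Set B}

theorem simple_mem_WJ {j : B} (hj : j ∈ J) : cs.simple j ∈ WJ cs J :=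
  Subgroup.subset_closure ⟨j, hj, rfl⟩

theorem wordProd_mem_WJ {ω : List B} (h : ∀ j ∈ ω, j ∈ J) : cs.wordProd ω ∈ WJ cs J := by
  induction ω with
  | nil => exact one_mem _
  | cons i ω ih =>
    rw [cs.wordProd_cons]
    exact mul_mem (simple_mem_WJ (h i List.mem_cons_self))
      (ih fun j hj ↦ h j (List.mem_cons_of_mem i hj))

theorem exists_wordProd_eq_of_mem_WJ {v : W} (hv : v ∈ WJ cs J) :
    ∃ ω : List B, (∀ j ∈ ω, j ∈ J) ∧ cs.wordProd ω = v := by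
  induction hv using Subgroup.closure_induction with
  | mem x hx =>
    obtain ⟨j, hj, rfl⟩ := hx
    exact ⟨[j], by simpa using hj, cs.wordProd_singleton j⟩
  | one => exact ⟨[], by simp, cs.wordProd_nil⟩
  | mul x y _ _ ihx ihy =>
    obtain ⟨ω₁, h₁, rfl⟩ := ihx
    obtain ⟨ω₂, h₂, rfl⟩ := ihy
    exact ⟨ω₁ ++ ω₂, fun j hj ↦ (List.mem_append.mp hj).elim (h₁ j) (h₂ j),
      cs.wordProd_append ω₁ ω₂⟩
  | inv x _ ih =>
    obtain ⟨ω, h, rfl⟩ := ih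
    exact ⟨ω.reverse, fun j hj ↦ h j (List.mem_reverse.mp hj), cs.wordProd_reverse ω⟩

theorem exists_isRightDescent_of_mem_WJ {v : W} (hv : v ∈ WJ cs J) (hv₁ : v ≠ 1) :
    ∃ j ∈ J, cs.IsRightDescent v j := by
  obtain ⟨ω, hωJ, rfl⟩ := exists_wordProd_eq_of_mem_WJ hv
  obtain ⟨ω', hsub, hred, hprod⟩ := exists_sublist_isReduced cs ω
  rw [← hprod] at hv₁ ⊢
  obtain ⟨ω'', j, rfl⟩ := (List.eq_nil_or_concat ω').resolve_left
    (by rintro rfl; exact hv₁ cs.wordProd_nil)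
  refine ⟨j, hωJ j (hsub.subset (by simp)), ?_⟩
  have hle := cs.length_wordProd_le ω''
  rw [List.concat_eq_append] at hred
  rw [CoxeterSystem.IsRightDescent, List.concat_eq_append, hred, cs.wordProd_append,
    cs.wordProd_singleton, simple_mul_simple_cancel_right, List.length_append,
    List.length_singleton]
  omega

variable (cs J) in
theorem exists_forall_length_mul_le (w : W) :
    ∃ v ∈ WJ cs J, ∀ v' ∈ WJ cs J, cs.length (w * v) ≤ cs.length (w * v') := by
  obtain ⟨v, hv, hmin⟩ := (InvImage.wf (fun v ↦ cs.length (w * v)) wellFounded_lt).has_min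
    (WJ cs J : Set W) ⟨1, one_mem _⟩
  exact ⟨v, hv, fun v' hv' ↦ not_lt.mp (hmin v' hv')⟩

/-- By minimality of `u`, a reduced subword of (reduced word of `u`) ++ (`J`-word of `v`) keeps
every letter of the first part. -/
theorem length_mul_of_forall_length_le {u v : W}
    (hu : ∀ v' ∈ WJ cs J, cs.length u ≤ cs.length (u * v')) (hv : v ∈ WJ cs J) :
    cs.length (u * v) = cs.length u + cs.length v := by
  obtain ⟨α, hα, rfl⟩ := cs.exists_isReduced u
  obtain ⟨β, hβJ, rfl⟩ := exists_wordProd_eq_of_mem_WJ hv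
  obtain ⟨γ, hsub, hγ, hprod⟩ := exists_sublist_isReduced cs (α ++ β)
  obtain ⟨α', β', rfl, hα', hβ'⟩ := List.sublist_append_iff.mp hsub
  rw [cs.wordProd_append, cs.wordProd_append] at hprod
  have hβ'J : cs.wordProd β' ∈ WJ cs J := wordProd_mem_WJ fun j hj ↦ hβJ j (hβ'.subset hj)
  have hα'α : α' = α := by
    refine hα'.eq_of_length (le_antisymm hα'.length_le ?_)
    calc α.length = cs.length (cs.wordProd α) := hα.symm
      _ ≤ cs.length (cs.wordProd α * (cs.wordProd β * (cs.wordProd β')⁻¹)) :=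
          hu _ (mul_mem (wordProd_mem_WJ hβJ) (inv_mem hβ'J))
      _ = cs.length (cs.wordProd α') := by rw [← mul_assoc, ← hprod, mul_inv_cancel_right]
      _ ≤ α'.length := cs.length_wordProd_le _
  rw [hα'α] at hprod hγ
  have hβ'β : cs.wordProd β' = cs.wordProd β := mul_left_cancel hprod
  have hβ'len := cs.length_wordProd_le β'
  have hle := cs.length_mul_le (cs.wordProd α) (cs.wordProd β)
  rw [CoxeterSystem.IsReduced, cs.wordProd_append, hprod, List.length_append] at hγ
  rw [hβ'β] at hβ'len
  rw [hα] at hle ⊢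
  omega

theorem mem_minRep_iff {u : W} :
    u ∈ MinRep cs J ↔ ∀ v ∈ WJ cs J, cs.length u ≤ cs.length (u * v) := by
  refine ⟨fun hu ↦ ?_, fun hu j hj ↦
    lt_of_le_of_ne (hu _ (simple_mem_WJ hj)) (cs.length_mul_simple_ne u j).symm⟩
  obtain ⟨v₀, hv₀, hmin⟩ := exists_forall_length_mul_le cs J u
  have hmin' : ∀ v ∈ WJ cs J, cs.length (u * v₀) ≤ cs.length (u * v₀ * v) := fun v hv ↦ by
    rw [mul_assoc]
    exact hmin _ (mul_mem hv₀ hv)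
  -- Were `v₀ ≠ 1`, a right descent `s_j` of `v₀⁻¹` with `j ∈ J` would shorten `u = u v₀ v₀⁻¹`.
  suffices v₀ = 1 by simpa [this] using hmin
  by_contra hne
  obtain ⟨j, hj, hdesc⟩ := exists_isRightDescent_of_mem_WJ (inv_mem hv₀) (inv_ne_one.mpr hne)
  have h₁ := length_mul_of_forall_length_le hmin' (inv_mem hv₀)
  have h₂ := length_mul_of_forall_length_le hmin' (mul_mem (inv_mem hv₀) (simple_mem_WJ hj))
  rw [mul_inv_cancel_right] at h₁
  rw [← mul_assoc, mul_inv_cancel_right] at h₂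
  have := hu j hj
  rw [CoxeterSystem.IsRightDescent] at hdesc
  omega

theorem length_mul_of_mem_minRep {u v : W} (hu : u ∈ MinRep cs J) (hv : v ∈ WJ cs J) :
    cs.length (u * v) = cs.length u + cs.length v :=
  length_mul_of_forall_length_le (mem_minRep_iff.mp hu) hv

theorem eq_of_mem_minRep {u u' : W} (hu : u ∈ MinRep cs J) (hu' : u' ∈ MinRep cs J)
    (h : (u : W ⧸ WJ cs J) = u') : u = u' := by
  have hv := QuotientGroup.eq.mp h
  have h₁ := length_mul_of_mem_minRep hu hv
  have h₂ := length_mul_of_mem_minRep hu' (inv_mem hv)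
  rw [mul_inv_cancel_left] at h₁
  rw [mul_inv_rev, inv_inv, mul_inv_cancel_left, ← cs.length_inv (u'⁻¹ * u), mul_inv_rev,
    inv_inv] at h₂
  exact inv_mul_eq_one.mp (cs.length_eq_zero_iff.mp (by omega))

variable (cs J) in
theorem exists_mem_minRep_mk_eq (σ : W ⧸ WJ cs J) :
    ∃ u ∈ MinRep cs J, (u : W ⧸ WJ cs J) = σ := by
  obtain ⟨w, rfl⟩ := QuotientGroup.mk_surjective σ
  obtain ⟨v, hv, hmin⟩ := exists_forall_length_mul_le cs J w
  refine ⟨w * v, mem_minRep_iff.mpr fun v' hv' ↦ ?_, QuotientGroup.mk_mul_of_mem w hv⟩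
  rw [mul_assoc]
  exact hmin _ (mul_mem hv hv')

variable (cs J) in
noncomputable def minRepOf (σ : W ⧸ WJ cs J) : W :=
  (exists_mem_minRep_mk_eq cs J σ).choose

theorem minRepOf_mem (σ : W ⧸ WJ cs J) : minRepOf cs J σ ∈ MinRep cs J :=
  (exists_mem_minRep_mk_eq cs J σ).choose_spec.1

theorem mk_minRepOf (σ : W ⧸ WJ cs J) : (QuotientGroup.mk (minRepOf cs J σ) : W ⧸ WJ cs J) = σ :=
  (exists_mem_minRep_mk_eq cs J σ).choose_spec.2

theorem minRepOf_mk {u : W} (hu : u ∈ MinRep cs J) : minRepOf cs J u = u :=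
  eq_of_mem_minRep (minRepOf_mem _) hu (mk_minRepOf _)

theorem cosetLE_iff {σ τ : W ⧸ WJ cs J} :
    CosetLE cs J σ τ ↔ BruhatLE cs (minRepOf cs J σ) (minRepOf cs J τ) := by
  refine ⟨fun ⟨v, w, hv, hw, hvσ, hwτ, h⟩ ↦ ?_, fun h ↦
    ⟨_, _, minRepOf_mem σ, minRepOf_mem τ, mk_minRepOf σ, mk_minRepOf τ, h⟩⟩
  rwa [← hvσ, ← hwτ, minRepOf_mk hv, minRepOf_mk hw]

theorem not_isRightDescent_of_mem_minRep {u : W} {j : B} (hu : u ∈ MinRep cs J) (hj : j ∈ J) :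
    ¬ cs.IsRightDescent u j :=
  lt_asymm (hu j hj)

theorem simple_mul_mem_minRep {u : W} {i : B} (hu : u ∈ MinRep cs J)
    (h : cs.IsLeftDescent u i) : cs.simple i * u ∈ MinRep cs J := by
  intro j hj
  have h₁ := hu j hj
  rw [cs.isLeftDescent_iff] at h
  rw [mul_assoc]
  rcases cs.length_simple_mul (u * cs.simple j) i with h₂ | h₂ <;> omega

/-- Deodhar's lemma. -/
theorem exists_simple_mul_eq_mul_simple {u : W} {i : B} (hu : u ∈ MinRep cs J)
    (hi : ¬ cs.IsLeftDescent u i) (hiu : cs.simple i * u ∉ MinRep cs J) :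
    ∃ j ∈ J, cs.simple i * u = u * cs.simple j := by
  obtain ⟨j, hj, hle⟩ : ∃ j ∈ J,
      cs.length (cs.simple i * u * cs.simple j) ≤ cs.length (cs.simple i * u) := by
    simpa [MinRep] using hiu
  refine ⟨j, hj, ?_⟩
  have hlen : cs.length (cs.simple i * u * cs.simple j) + 1 = cs.length (cs.simple i * u) := by
    rcases cs.length_mul_simple (cs.simple i * u) j with h | h <;> omega
  have hw : cs.IsLeftDescent (cs.simple i * u) i :=
    cs.isLeftDescent_iff_not_isLeftDescent_mul.mpr (by rwa [simple_mul_simple_cancel_left])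
  have hwt : ¬ cs.IsLeftDescent (cs.simple i * u * cs.simple j) i := by
    rw [cs.not_isLeftDescent_iff, mul_assoc, simple_mul_simple_cancel_left, ← mul_assoc]
    have := hu j hj
    rw [cs.not_isLeftDescent_iff] at hi
    rcases cs.length_mul_simple u j with h | h <;> omega
  have h := mul_eq_simple_mul_of_not_isLeftDescent_mul cs (cs.isReflection_simple j) hlen hw hwt
  rw [simple_mul_simple_cancel_left] at h
  nth_rewrite 2 [← h]
  exact (cs.simple_mul_simple_cancel_right j).symm

theorem minRepOf_smul_of_cosetLE {σ : W ⧸ WJ cs J} {i : B}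
    (h : CosetLE cs J (cs.simple i • σ) σ) :
    (cs.IsLeftDescent (minRepOf cs J σ) i ∧
        minRepOf cs J (cs.simple i • σ) = cs.simple i * minRepOf cs J σ) ∨
      ∃ j ∈ J, cs.simple i * minRepOf cs J σ = minRepOf cs J σ * cs.simple j := by
  have hmk : cs.simple i • σ = QuotientGroup.mk (cs.simple i * minRepOf cs J σ) := by
    conv_lhs => rw [← mk_minRepOf σ]
    rfl
  by_cases hd : cs.IsLeftDescent (minRepOf cs J σ) i
  · exact .inl ⟨hd, by rw [hmk, minRepOf_mk (simple_mul_mem_minRep (minRepOf_mem σ) hd)]⟩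
  · refine .inr (exists_simple_mul_eq_mul_simple (minRepOf_mem σ) hd fun hmem ↦ ?_)
    have := length_le_of_bruhatLE (cosetLE_iff.mp h)
    rw [hmk, minRepOf_mk hmem] at this
    rw [cs.not_isLeftDescent_iff] at hd
    omega

theorem smul_eq_self_of_simple_mul_eq {σ : W ⧸ WJ cs J} {i j : B} (hj : j ∈ J)
    (h : cs.simple i * minRepOf cs J σ = minRepOf cs J σ * cs.simple j) :
    cs.simple i • σ = σ := by
  rw [← mk_minRepOf σ, MulAction.Quotient.smul_mk, smul_eq_mul, h,
    QuotientGroup.mk_mul_of_mem _ (simple_mem_WJ hj)]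

end MinimalCosetRepresentatives

end KMChev

namespace KMChev

/-- Z-property for cosets: for `σ, τ ∈ W/W_J` and a simple reflection
`s` with `sσ ≤ σ` and `sτ ≤ τ`, we have `σ ≤ τ ↔ sσ ≤ τ ↔ sσ ≤ sτ`. -/
theorem coset_z_property {B W : Type*} [Group W] {M : CoxeterMatrix B}
    (cs : CoxeterSystem M W) (J : Set B) (i : B) (σ τ : W ⧸ WJ cs J)
    (hσ : CosetLE cs J (cs.simple i • σ) σ) (hτ : CosetLE cs J (cs.simple i • τ) τ) :
    (CosetLE cs J σ τ ↔ CosetLE cs J (cs.simple i • σ) τ) ∧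
    (CosetLE cs J σ τ ↔ CosetLE cs J (cs.simple i • σ) (cs.simple i • τ)) := by
  rcases minRepOf_smul_of_cosetLE hσ with ⟨hσd, hσs⟩ | ⟨j, hj, hσj⟩ <;>
    rcases minRepOf_smul_of_cosetLE hτ with ⟨hτd, hτs⟩ | ⟨k, hk, hτk⟩
  · simp only [cosetLE_iff, hσs, hτs]
    exact ⟨bruhatLE_iff_simple_mul_le hσd hτd, bruhatLE_iff_simple_mul_le_simple_mul hσd hτd⟩
  · have key : CosetLE cs J σ τ ↔ CosetLE cs J (cs.simple i • σ) τ := by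
      rw [cosetLE_iff, cosetLE_iff, hσs]
      exact ⟨(Relation.ReflTransGen.single (bruhatCov_simple_mul_of_isLeftDescent hσd)).trans,
        bruhatLE_of_simple_mul_le (not_isRightDescent_of_mem_minRep (minRepOf_mem σ) hk)
          (not_isRightDescent_of_mem_minRep (minRepOf_mem τ) hk) hτk hσd⟩
    rw [smul_eq_self_of_simple_mul_eq hk hτk]
    exact ⟨key, key⟩
  · rw [smul_eq_self_of_simple_mul_eq hj hσj, cosetLE_iff, cosetLE_iff, hτs]
    exact ⟨Iff.rfl, (bruhatLE_simple_mul_iff (not_isLeftDescent_of_simple_mul_eq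
      (not_isRightDescent_of_mem_minRep (minRepOf_mem σ) hj) hσj) hτd).symm⟩
  · rw [smul_eq_self_of_simple_mul_eq hj hσj, smul_eq_self_of_simple_mul_eq hk hτk]
    exact ⟨Iff.rfl, Iff.rfl⟩

end KMChev
end

section
/- The total order <_λ on positive real coroots is a reflection order: whenever α <_λ β and aα + bβ is a positive real coroot for some positive reals a, b, one has α <_λ aα+bβ <_λ β. -/
namespace KMChev

open CoxeterSystem

variable {W : Type*} [Group W] {r : ℕ} {M : CoxeterMatrix (Fin r)}

/-- The rational coroot space, with simple coroots `α_i^∨` as standard basis;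
the Dynkin node set is `Fin r` with its standard total order `1 < 2 < ⋯ < r`. -/
abbrev CorootSpace (r : ℕ) := Fin r → ℚ

/-- Data of the real coroots of a symmetrizable Kac-Moody algebra over `ℚ`: the Weyl
group (a Coxeter group `cs`) acting linearly on the coroot space via a generalized
Cartan matrix `A` (GCM conditions and symmetrizability included). -/
structure CorootDataQ (cs : CoxeterSystem M W) where
  act : W →* (CorootSpace r ≃ₗ[ℚ] CorootSpace r)
  A : Fin r → Fin r → ℤ
  A_diag : ∀ i, A i i = 2
  A_nonpos : ∀ i j, i ≠ j → A i j ≤ 0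
  A_zero_iff : ∀ i j, A i j = 0 ↔ A j i = 0
  symmetrizable : ∃ d : Fin r → ℚ, (∀ i, 0 < d i) ∧ ∀ i j, d i * (A i j : ℚ) = d j * A j i
  act_simple : ∀ i j, act (cs.simple i) (Pi.single j 1 : CorootSpace r)
    = (Pi.single j 1 : CorootSpace r) - (A i j : ℚ) • (Pi.single i 1 : CorootSpace r)

/-- The set of positive real coroots. -/
def IsPosCorootQ {cs : CoxeterSystem M W} (D : CorootDataQ cs) (γ : CorootSpace r) : Prop :=
  (∃ (u : W) (j : Fin r), γ = D.act u (Pi.single j 1 : CorootSpace r)) ∧ ∀ j, 0 ≤ γ j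

end KMChev

namespace KMChev

variable {W : Type*} [Group W] {r : ℕ} {M : CoxeterMatrix (Fin r)}

/-- The vector `(1/⟨α,λ⟩)(0, c_1, …, c_r) ∈ ℚ^{r+1}` associated to a coroot
`α = Σ c_i α_i^∨` with `⟨α,λ⟩ > 0`. -/
def lexVec (pl : CorootSpace r →ₗ[ℚ] ℚ) (γ : CorootSpace r) : Fin (r + 1) → ℚ :=
  Fin.cons 0 fun i => γ i / pl γ

/-- The total order `<_λ` on positive real coroots: coroots with `⟨α,λ⟩ > 0` come
first, ordered lexicographically by their vectors; coroots with `⟨α,λ⟩ = 0` (the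
positive coroots of `W_λ`) come last, ordered by a fixed reflection order `rJ`. -/
def LtLam (pl : CorootSpace r →ₗ[ℚ] ℚ) (rJ : CorootSpace r → CorootSpace r → Prop)
    (α β : CorootSpace r) : Prop :=
  (0 < pl α ∧ 0 < pl β ∧ toLex (lexVec pl α) < toLex (lexVec pl β)) ∨
  (0 < pl α ∧ pl β = 0) ∨
  (pl α = 0 ∧ pl β = 0 ∧ rJ α β)

/-! When `⟨α,λ⟩` and `⟨β,λ⟩` are both positive, `lexVec (aα+bβ)` is a
strict convex combination of `lexVec α` and `lexVec β` and therefore lies strictly between them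
lexicographically. If `⟨β,λ⟩ = 0 < ⟨α,λ⟩`, then `lexVec (aα+bβ) = lexVec α + c • (0, β)` with
`c > 0`, and `β` is a nonzero nonnegative vector, so `aα+bβ` lies above `α` and still has positive
pairing with `λ`. If both pairings vanish, the claim is the reflection order property of `rJ`. -/

lemma IsPosCorootQ.pos {cs : CoxeterSystem M W} {D : CorootDataQ cs} {γ : CorootSpace r}
    (h : IsPosCorootQ D γ) : 0 < γ := by
  obtain ⟨⟨u, j, rfl⟩, hnonneg⟩ := h
  refine lt_of_le_of_ne hnonneg (Ne.symm ?_)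
  exact (map_ne_zero_iff _ (D.act u).injective).2 (by simp)

section Lex

variable {ι 𝕜 : Type*} [LinearOrder ι] [Field 𝕜] [LinearOrder 𝕜] [IsStrictOrderedRing 𝕜]

lemma toLex_lt_smul_add_one_sub_smul {v w : ι → 𝕜} {t : 𝕜} (ht₀ : 0 < t) (ht₁ : t < 1)
    (hvw : toLex v < toLex w) :
    toLex v < toLex (t • v + (1 - t) • w) ∧ toLex (t • v + (1 - t) • w) < toLex w := by
  obtain ⟨i, hagree, hlt⟩ := hvw
  simp only [Pi.toLex_apply] at hagree hlt
  have hagree' : ∀ j < i, (t • v + (1 - t) • w) j = v j := fun j hj => by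
    simp only [Pi.add_apply, Pi.smul_apply, smul_eq_mul, hagree j hj]; ring
  have hmid : v i < (t • v + (1 - t) • w) i ∧ (t • v + (1 - t) • w) i < w i := by
    simp only [Pi.add_apply, Pi.smul_apply, smul_eq_mul]
    constructor <;> nlinarith
  exact ⟨⟨i, fun j hj => (hagree' j hj).symm, hmid.1⟩,
    ⟨i, fun j hj => (hagree' j hj).trans (hagree j hj), hmid.2⟩⟩

end Lex

section LexVec

variable (pl : CorootSpace r →ₗ[ℚ] ℚ) {α β : CorootSpace r} {a b : ℚ}

lemma lexVec_smul_add (hα : pl α ≠ 0) (hβ : pl β ≠ 0) (hγ : pl (a • α + b • β) ≠ 0) :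
    lexVec pl (a • α + b • β) =
      (a * pl α / pl (a • α + b • β)) • lexVec pl α +
        (1 - a * pl α / pl (a • α + b • β)) • lexVec pl β := by
  have hpl : pl (a • α + b • β) = a * pl α + b * pl β := by simp
  rw [hpl] at hγ ⊢
  funext k
  refine Fin.cases ?_ (fun i => ?_) k
  · simp [lexVec]
  · simp only [lexVec, Fin.cons_succ, Pi.add_apply, Pi.smul_apply, smul_eq_mul, hpl]
    field_simp
    ring

lemma lexVec_smul_add_of_map_eq_zero (hα : pl α ≠ 0) (ha : a ≠ 0) (hβ : pl β = 0) :
    lexVec pl (a • α + b • β) = lexVec pl α + (b / (a * pl α)) • Fin.cons 0 β := by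
  have hpl : pl (a • α + b • β) = a * pl α := by simp [hβ]
  funext k
  refine Fin.cases ?_ (fun i => ?_) k
  · simp [lexVec]
  · simp only [lexVec, Fin.cons_succ, Pi.add_apply, Pi.smul_apply, smul_eq_mul, hpl]
    field_simp

lemma toLex_lexVec_smul_add_mem_Ioo (hα : 0 < pl α) (hβ : 0 < pl β) (ha : 0 < a) (hb : 0 < b)
    (hαβ : toLex (lexVec pl α) < toLex (lexVec pl β)) :
    toLex (lexVec pl α) < toLex (lexVec pl (a • α + b • β)) ∧
      toLex (lexVec pl (a • α + b • β)) < toLex (lexVec pl β) := by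
  have hpl : pl (a • α + b • β) = a * pl α + b * pl β := by simp
  have hγ : 0 < pl (a • α + b • β) := by rw [hpl]; positivity
  have ht₁ : a * pl α / pl (a • α + b • β) < 1 := by
    rw [div_lt_one hγ, hpl]
    exact lt_add_of_pos_right _ (by positivity)
  rw [lexVec_smul_add pl hα.ne' hβ.ne' hγ.ne']
  exact toLex_lt_smul_add_one_sub_smul (by positivity) ht₁ hαβ

lemma toLex_lexVec_lt_smul_add_of_map_eq_zero (hα : 0 < pl α) (ha : 0 < a) (hb : 0 < b)
    (hβ : pl β = 0) (hβ_pos : 0 < β) :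
    toLex (lexVec pl α) < toLex (lexVec pl (a • α + b • β)) := by
  have hcons : (0 : Fin (r + 1) → ℚ) < Fin.cons 0 β := by
    obtain ⟨hβ_nonneg, j, hj⟩ := Pi.lt_def.1 hβ_pos
    exact Pi.lt_def.2 ⟨fun k => Fin.cases le_rfl hβ_nonneg k, j.succ, hj⟩
  rw [lexVec_smul_add_of_map_eq_zero pl hα.ne' ha.ne' hβ]
  exact Pi.toLex_strictMono (lt_add_of_pos_right _ (smul_pos (by positivity) hcons))

end LexVec

theorem ltLam_reflection_order_general {cs : CoxeterSystem M W} (D : CorootDataQ cs)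
    (pl : CorootSpace r →ₗ[ℚ] ℚ)
    (rJ : CorootSpace r → CorootSpace r → Prop)
    (hrJ_refl_order : ∀ α β, IsPosCorootQ D α → IsPosCorootQ D β → pl α = 0 →
      pl β = 0 → rJ α β → ∀ a b : ℚ, 0 < a → 0 < b →
      IsPosCorootQ D (a • α + b • β) →
      rJ α (a • α + b • β) ∧ rJ (a • α + b • β) β) :
    ∀ α β, IsPosCorootQ D α → IsPosCorootQ D β →
      ∀ a b : ℚ, 0 < a → 0 < b → IsPosCorootQ D (a • α + b • β) →
      LtLam pl rJ α β →
      LtLam pl rJ α (a • α + b • β) ∧ LtLam pl rJ (a • α + b • β) β := by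
  intro α β hα hβ a b ha hb hγ hlt
  have hpl : pl (a • α + b • β) = a * pl α + b * pl β := by simp
  rcases hlt with ⟨hplα, hplβ, hlex⟩ | ⟨hplα, hplβ⟩ | ⟨hplα, hplβ, hrJ⟩
  · have hplγ : 0 < pl (a • α + b • β) := by rw [hpl]; positivity
    obtain ⟨h₁, h₂⟩ := toLex_lexVec_smul_add_mem_Ioo pl hplα hplβ ha hb hlex
    exact ⟨Or.inl ⟨hplα, hplγ, h₁⟩, Or.inl ⟨hplγ, hplβ, h₂⟩⟩
  · have hplγ : 0 < pl (a • α + b • β) := by rw [hpl, hplβ]; positivity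
    have hlex := toLex_lexVec_lt_smul_add_of_map_eq_zero pl hplα ha hb hplβ hβ.pos
    exact ⟨Or.inl ⟨hplα, hplγ, hlex⟩, Or.inr (Or.inl ⟨hplγ, hplβ⟩)⟩
  · have hplγ : pl (a • α + b • β) = 0 := by simp [hpl, hplα, hplβ]
    obtain ⟨h₁, h₂⟩ := hrJ_refl_order α β hα hβ hplα hplβ hrJ a b ha hb hγ
    exact ⟨Or.inr (Or.inr ⟨hplα, hplγ, h₁⟩), Or.inr (Or.inr ⟨hplγ, hplβ, h₂⟩)⟩

/-- the total order `<_λ` on positive real coroots is a reflection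
order: whenever `α <_λ β` and `aα + bβ` is a positive real coroot for positive
rationals `a, b`, one has `α <_λ aα + bβ <_λ β`. -/
theorem ltLam_reflection_order {cs : CoxeterSystem M W} (D : CorootDataQ cs)
    (pl : CorootSpace r →ₗ[ℚ] ℚ)
    (hdom : ∀ i, 0 ≤ pl (Pi.single i 1 : CorootSpace r))
    (hint : ∀ i, ∃ m : ℤ, pl (Pi.single i 1 : CorootSpace r) = (m : ℚ))
    (hposdom : ∀ γ, IsPosCorootQ D γ → 0 ≤ pl γ)
    (rJ : CorootSpace r → CorootSpace r → Prop)
    -- `rJ` is a reflection order on the positive coroots orthogonal to `λ`: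
    (hrJ_tot : ∀ α β, IsPosCorootQ D α → IsPosCorootQ D β → pl α = 0 → pl β = 0 →
      α ≠ β → rJ α β ∨ rJ β α)
    (hrJ_asymm : ∀ α β, rJ α β → ¬ rJ β α)
    (hrJ_trans : ∀ α β γ, rJ α β → rJ β γ → rJ α γ)
    (hrJ_refl_order : ∀ α β, IsPosCorootQ D α → IsPosCorootQ D β → pl α = 0 →
      pl β = 0 → rJ α β → ∀ a b : ℚ, 0 < a → 0 < b →
      IsPosCorootQ D (a • α + b • β) →
      rJ α (a • α + b • β) ∧ rJ (a • α + b • β) β) :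
    ∀ α β, IsPosCorootQ D α → IsPosCorootQ D β →
      ∀ a b : ℚ, 0 < a → 0 < b → IsPosCorootQ D (a • α + b • β) →
      LtLam pl rJ α β →
      LtLam pl rJ α (a • α + b • β) ∧ LtLam pl rJ (a • α + b • β) β :=
  ltLam_reflection_order_general D pl rJ hrJ_refl_order

end KMChev
end

section
/- In the nilHecke ring, write T_w e^λ = Σ_v b^w_{vλ} T_v. If s_i w < w and z < s_i z, then the coefficients satisfy the recurrences b^w_{zλ} = T_i · b^{s_iw}_{zλ} and b^w_{s_iz,λ} = T_i · b^{s_iw}_{s_iz,λ} + s_i(b^{s_iw}_{zλ} - b^{s_iw}_{s_iz,λ}). -/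
/-!
Write `w = s_i w'` with `w' < w`, so that `T_w = T_i T_{w'}`. Apply `T_i` to
`T_{w'} e^λ = Σ_v b^{w'}_{vλ} T_v` using the twisted Leibniz rule
`T_i (g h) = (T_i g) h + (s_i g) (T_i h)` together with `T_i T_v = T_{s_i v}` for `v < s_i v` and
`T_i T_v = -T_v` for `s_i v < v`. Collecting terms gives the coefficient of `T_v` in `T_w e^λ`:
it is `T_i b^{w'}_{vλ}`, plus `s_i (b^{w'}_{s_i v,λ} - b^{w'}_{vλ})` when `s_i v < v`.
Linear independence of the `T_v` identifies it with `b^w_{vλ}`.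
-/

namespace KMChev

open CoxeterSystem Function

section Demazure

variable {R : Type*} [CommRing R] {σ : R ≃+* R} {a : R} {T : R → R}

theorem demazure_mul (hreg : IsLeftRegular (1 - a)) (hT : ∀ f, (1 - a) * T f = σ f - f)
    (g h : R) : T (g * h) = T g * h + σ g * T h :=
  hreg <| by linear_combination hT (g * h) - h * hT g - σ g * hT h + map_mul σ g h

theorem map_demazure (hreg : IsLeftRegular (1 - a)) (hσ : Involutive σ) (hσa : σ a * a = 1)
    (hT : ∀ f, (1 - a) * T f = σ f - f) (f : R) : σ (T f) = a * T f := by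
  have hσT : (1 - σ a) * σ (T f) = f - σ f := by
    simpa [hσ f] using congrArg σ (hT f)
  exact hreg <| by linear_combination (-a) * hσT + (-a) * hT f - σ (T f) * hσa

theorem demazure_demazure (hreg : IsLeftRegular (1 - a)) (hσ : Involutive σ)
    (hσa : σ a * a = 1) (hT : ∀ f, (1 - a) * T f = σ f - f) (f : R) : T (T f) = -T f :=
  hreg <| by linear_combination hT (T f) + map_demazure hreg hσ hσa hT f

end Demazure

section Reflection

open AddMonoidAlgebra

variable {Λ : Type*} [AddCommGroup Λ] {α : Λ} {c : Λ →+ ℤ}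
  {σ : AddMonoidAlgebra ℤ Λ ≃+* AddMonoidAlgebra ℤ Λ}

theorem involutive_of_map_single (hc : c α = 2)
    (hσ : ∀ μ, σ (single μ 1) = single (μ - c μ • α) 1) : Involutive σ := by
  intro x
  induction x using AddMonoidAlgebra.induction_linear with
  | zero => simp
  | add f g hf hg => rw [map_add, map_add, hf, hg]
  | single μ n =>
    rw [← mul_one n, ← smul_eq_mul, ← smul_single, map_zsmul, map_zsmul, hσ, hσ]
    congr 2
    simp only [map_sub, map_zsmul, hc, smul_eq_mul]
    module

theorem map_single_mul_single (hc : c α = 2)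
    (hσ : ∀ μ, σ (single μ 1) = single (μ - c μ • α) 1) :
    σ (single α 1) * single α 1 = 1 := by
  rw [hσ, hc, single_mul_single, one_def, mul_one]
  congr 1
  abel

end Reflection

theorem eq_of_forall_finsum_mul_eq {W X R : Type*} [CommRing R] {Tw : W → X → R}
    (hindep : ∀ c : W → R, (support c).Finite → (∀ f, ∑ᶠ v, c v * Tw v f = 0) →
      ∀ v, c v = 0)
    {c d : W → R} (hc : (support c).Finite) (hd : (support d).Finite)
    (h : ∀ f, ∑ᶠ v, c v * Tw v f = ∑ᶠ v, d v * Tw v f) : c = d := by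
  refine funext fun v => sub_eq_zero.mp (hindep (c - d) ((hc.union hd).subset
    (support_sub _ _)) (fun f => ?_) v)
  simp only [Pi.sub_apply, sub_mul]
  rw [finsum_sub_distrib (hc.subset (support_mul_subset_left _ _))
    (hd.subset (support_mul_subset_left _ _)), h, sub_self]

theorem finite_support_of_imp_eq_zero {W R R' : Type*} [Group W] [Zero R] [Zero R']
    {c : W → R} (hc : (support c).Finite) (g : W) (φ : W → R')
    (hφ : ∀ v, c v = 0 → c (g * v) = 0 → φ v = 0) :
    (support φ).Finite := by
  refine (hc.union (hc.preimage (mul_right_injective g).injOn)).subset fun v hv => ?_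
  by_contra hvc
  simp only [Set.mem_union, Set.mem_preimage, mem_support, not_or, not_not] at hvc
  exact hv (hφ v hvc.1 hvc.2)

section NilHecke

variable {B W : Type*} [Group W] {M : CoxeterMatrix B} (cs : CoxeterSystem M W)
  {R : Type*} [CommRing R]

open Classical in
/-- The coefficient of `T_v` in `T_i (Σ_u c_u T_u)`. -/
noncomputable def demazureCoeff (σ : R → R) (T : R → R) (i : B) (c : W → R) (v : W) : R :=
  T (c v) + if cs.IsLeftDescent v i then σ (c (cs.simple i * v) - c v) else 0

open Classical in
theorem demazure_apply_eq_ite {T : R → R} (hTT : ∀ f, T (T f) = -T f) {X : Type*}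
    {Tw : W → X → R} {i : B} (hmul : ∀ w, cs.length (cs.simple i * w) = cs.length w + 1 →
      ∀ f, Tw (cs.simple i * w) f = T (Tw w f))
    (v : W) (f : X) :
    T (Tw v f) = if cs.IsLeftDescent v i then -Tw v f else Tw (cs.simple i * v) f := by
  by_cases hv : cs.IsLeftDescent v i
  · have hTw : Tw v f = T (Tw (cs.simple i * v) f) := by
      conv_lhs => rw [← cs.simple_mul_simple_cancel_left (w := v) i]
      exact hmul _ (cs.not_isLeftDescent_iff.mp
        (cs.isLeftDescent_iff_not_isLeftDescent_mul.mp hv)) f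
    rw [if_pos hv, hTw, hTT]
  · rw [if_neg hv, hmul v (cs.not_isLeftDescent_iff.mp hv)]

open Classical in
theorem demazure_finsum_mul {σ : R ≃+* R} {T : R →+ R}
    (hLeib : ∀ g h, T (g * h) = T g * h + σ g * T h) {i : B} {t : W → R}
    (ht : ∀ v, T (t v) = if cs.IsLeftDescent v i then -t v else t (cs.simple i * v))
    {c : W → R} (hc : (support c).Finite) :
    T (∑ᶠ v, c v * t v) = ∑ᶠ v, demazureCoeff cs σ T i c v * t v := by
  set s := cs.simple i
  have hfin := finite_support_of_imp_eq_zero (R' := R) hc s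
  let g v := if cs.IsLeftDescent v i then -(σ (c v) * t v) else 0
  let h v := if cs.IsLeftDescent v i then σ (c (s * v)) * t v else 0
  -- `s` swaps descents and non-descents, so `σ (c v) * T (t v)` is split between them
  have hsplit : ∀ v, σ (c v) * T (t v) = g v + h (s * v) := by
    intro v
    by_cases hv : cs.IsLeftDescent v i
    · have hsv : ¬cs.IsLeftDescent (s * v) i := cs.isLeftDescent_iff_not_isLeftDescent_mul.mp hv
      simp [g, h, ht, hv, hsv]
    · have hsv : cs.IsLeftDescent (s * v) i := by
        rwa [cs.isLeftDescent_iff_not_isLeftDescent_mul, cs.simple_mul_simple_cancel_left]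
      simp [g, h, ht, hv, hsv, s, cs.simple_mul_simple_cancel_left]
  have hss : ∀ v, s * (s * v) = v := fun v => cs.simple_mul_simple_cancel_left i
  have hTc : (support fun v => T (c v) * t v).Finite := hfin _ fun v hv _ => by simp [hv]
  have hg : (support g).Finite := hfin _ fun v hv _ => by simp [g, hv]
  have hh : (support h).Finite := hfin _ fun v _ hsv => by simp [h, hsv]
  have hhs : (support fun v => h (s * v)).Finite := hfin _ fun v hv _ => by simp [h, hss, hv]
  calc T (∑ᶠ v, c v * t v)
      = ∑ᶠ v, T (c v) * t v + (∑ᶠ v, g v + ∑ᶠ v, h (s * v)) := by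
        rw [AddMonoidHom.map_finsum _ (hfin _ fun v hv _ => by simp [hv]),
          ← finsum_add_distrib hg hhs, ← finsum_add_distrib hTc (hg.union hhs |>.subset
            (support_add _ _))]
        exact finsum_congr fun v => by rw [hLeib, hsplit]
    _ = ∑ᶠ v, T (c v) * t v + (∑ᶠ v, g v + ∑ᶠ v, h v) := by
        congr 2
        exact finsum_comp_equiv (Equiv.mulLeft s)
    _ = ∑ᶠ v, demazureCoeff cs σ T i c v * t v := by
        rw [← finsum_add_distrib hg hh, ← finsum_add_distrib hTc (hg.union hh |>.subset
            (support_add _ _))]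
        refine finsum_congr fun v => ?_
        simp only [demazureCoeff, g, h, s, map_sub]
        split_ifs <;> ring

end NilHecke

theorem nilHecke_chevalley_recurrence_general
    {B W : Type*} [Group W] {M : CoxeterMatrix B} (cs : CoxeterSystem M W)
    {Λ : Type*} [AddCommGroup Λ]
    (αr : B → Λ)                          -- simple roots
    (cor : B → (Λ →+ ℤ))                  -- simple coroot pairings ⟨α_i^∨, ·⟩
    (hcor : ∀ i, cor i (αr i) = 2)
    (sR : B → (AddMonoidAlgebra ℤ Λ ≃+* AddMonoidAlgebra ℤ Λ))
    (hsR : ∀ i (μ : Λ), sR i (AddMonoidAlgebra.single μ 1)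
      = AddMonoidAlgebra.single (μ - cor i μ • αr i) 1)
    (hreg : ∀ i (x : AddMonoidAlgebra ℤ Λ),
      (1 - AddMonoidAlgebra.single (αr i) (1 : ℤ)) * x = 0 → x = 0)
    (Top : B → AddMonoidAlgebra ℤ Λ →+ AddMonoidAlgebra ℤ Λ)
    (hTop : ∀ i f, (1 - AddMonoidAlgebra.single (αr i) (1 : ℤ)) * Top i f
      = sR i f - f)
    (Tw : W → (AddMonoidAlgebra ℤ Λ →+ AddMonoidAlgebra ℤ Λ))
    (hTw_mul : ∀ (i : B) (w : W), cs.length (cs.simple i * w) = cs.length w + 1 →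
      ∀ f, Tw (cs.simple i * w) f = Top i (Tw w f))
    (lam : Λ)                             -- the weight λ
    (bc : W → W → AddMonoidAlgebra ℤ Λ)   -- the coefficients b^w_{vλ}
    (hbc_fin : ∀ u, (Function.support (bc u)).Finite)
    (hbc : ∀ (u : W) (f : AddMonoidAlgebra ℤ Λ),
      Tw u (AddMonoidAlgebra.single lam 1 * f) = ∑ᶠ v, bc u v * Tw v f)
    (hindep : ∀ c : W → AddMonoidAlgebra ℤ Λ, (Function.support c).Finite →
      (∀ f, ∑ᶠ v, c v * Tw v f = 0) → ∀ v, c v = 0)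
    (i : B) (w z : W)
    (hw : cs.length (cs.simple i * w) < cs.length w)
    (hz : cs.length z < cs.length (cs.simple i * z)) :
    bc w z = Top i (bc (cs.simple i * w) z) ∧
    bc w (cs.simple i * z) = Top i (bc (cs.simple i * w) (cs.simple i * z)) +
      sR i (bc (cs.simple i * w) z - bc (cs.simple i * w) (cs.simple i * z)) := by
  set w' := cs.simple i * w
  set e := AddMonoidAlgebra.single (αr i) (1 : ℤ)
  have hreg' : IsLeftRegular (1 - e) := isLeftRegular_iff_right_eq_zero_of_mul.mpr (hreg i)
  have hσ := involutive_of_map_single (hcor i) (hsR i)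
  have hσe : sR i e * e = 1 := map_single_mul_single (hcor i) (hsR i)
  have hww' : cs.simple i * w' = w := cs.simple_mul_simple_cancel_left i
  have hlen : cs.length (cs.simple i * w') = cs.length w' + 1 := by
    rw [hww']
    exact (cs.isLeftDescent_iff.mp hw).symm
  have hcoeff : bc w = demazureCoeff cs (sR i) (Top i) i (bc w') := by
    refine eq_of_forall_finsum_mul_eq hindep (hbc_fin w)
      (finite_support_of_imp_eq_zero (hbc_fin w') (cs.simple i) _ fun v h₁ h₂ => by
        simp [demazureCoeff, h₁, h₂]) fun f => ?_
    have hTT := demazure_demazure hreg' hσ hσe (hTop i)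
    rw [← demazure_finsum_mul cs (demazure_mul hreg' (hTop i))
        (demazure_apply_eq_ite cs (Tw := fun v f => Tw v f) hTT (hTw_mul i) · f) (hbc_fin w'),
      ← hbc, ← hbc, ← hTw_mul i w' hlen, hww']
  have hz' : ¬cs.IsLeftDescent z i := hz.asymm
  have hsz : cs.IsLeftDescent (cs.simple i * z) i := by
    rwa [cs.isLeftDescent_iff_not_isLeftDescent_mul, cs.simple_mul_simple_cancel_left]
  refine ⟨?_, ?_⟩ <;> rw [hcoeff] <;> simp [demazureCoeff, hz', hsz,
    cs.simple_mul_simple_cancel_left]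

/-- in the nilHecke ring, writing `T_w e^λ = Σ_v b^w_{vλ} T_v`, if
`s_i w < w` and `z < s_i z` then the coefficients satisfy the recurrences
`b^w_{zλ} = T_i · b^{s_iw}_{zλ}` and
`b^w_{s_iz,λ} = T_i · b^{s_iw}_{s_iz,λ} + s_i(b^{s_iw}_{zλ} - b^{s_iw}_{s_iz,λ})`.

Here `R(T) = ℤ[Λ]`; `s_i` acts on `R(T)` by `sR i` (induced by
`μ ↦ μ - ⟨α_i^∨,μ⟩ α_i`); `T_i = (1-e^{α_i})⁻¹(s_i - 1)` is characterized by
`(1 - e^{α_i}) (T_i f) = s_i f - f`; `T_w` is defined by `T_1 = id` and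
`T_{s_i w} = T_i ∘ T_w` whenever `ℓ(s_i w) = ℓ(w) + 1` (well-defined since the `T_i`
satisfy the braid relations and `T_i² = -T_i`); and the coefficients `b^w_{vλ}` are
determined by `T_w (e^λ f) = Σ_v b^w_{vλ} (T_v f)`, using that the `T_v` are
left-`R(T)`-linearly independent operators (`hindep`). -/
theorem nilHecke_chevalley_recurrence
    {B W : Type*} [Group W] {M : CoxeterMatrix B} (cs : CoxeterSystem M W)
    {Λ : Type*} [AddCommGroup Λ]
    (αr : B → Λ)                          -- simple roots
    (cor : B → (Λ →+ ℤ))                  -- simple coroot pairings ⟨α_i^∨, ·⟩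
    (hcor : ∀ i, cor i (αr i) = 2)
    (sR : B → (AddMonoidAlgebra ℤ Λ ≃+* AddMonoidAlgebra ℤ Λ))
    (hsR : ∀ i (μ : Λ), sR i (AddMonoidAlgebra.single μ 1)
      = AddMonoidAlgebra.single (μ - cor i μ • αr i) 1)
    (hreg : ∀ i (x : AddMonoidAlgebra ℤ Λ),
      (1 - AddMonoidAlgebra.single (αr i) (1 : ℤ)) * x = 0 → x = 0)
    (Top : B → AddMonoidAlgebra ℤ Λ →+ AddMonoidAlgebra ℤ Λ)
    (hTop : ∀ i f, (1 - AddMonoidAlgebra.single (αr i) (1 : ℤ)) * Top i f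
      = sR i f - f)
    (Tw : W → (AddMonoidAlgebra ℤ Λ →+ AddMonoidAlgebra ℤ Λ))
    (hTw_one : Tw 1 = AddMonoidHom.id _)
    (hTw_mul : ∀ (i : B) (w : W), cs.length (cs.simple i * w) = cs.length w + 1 →
      ∀ f, Tw (cs.simple i * w) f = Top i (Tw w f))
    (lam : Λ)                             -- the weight λ
    (bc : W → W → AddMonoidAlgebra ℤ Λ)   -- the coefficients b^w_{vλ}
    (hbc_fin : ∀ u, (Function.support (bc u)).Finite)
    (hbc : ∀ (u : W) (f : AddMonoidAlgebra ℤ Λ),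
      Tw u (AddMonoidAlgebra.single lam 1 * f) = ∑ᶠ v, bc u v * Tw v f)
    (hindep : ∀ c : W → AddMonoidAlgebra ℤ Λ, (Function.support c).Finite →
      (∀ f, ∑ᶠ v, c v * Tw v f = 0) → ∀ v, c v = 0)
    (i : B) (w z : W)
    (hw : cs.length (cs.simple i * w) < cs.length w)
    (hz : cs.length z < cs.length (cs.simple i * z)) :
    bc w z = Top i (bc (cs.simple i * w) z) ∧
    bc w (cs.simple i * z) = Top i (bc (cs.simple i * w) (cs.simple i * z)) +
      sR i (bc (cs.simple i * w) z - bc (cs.simple i * w) (cs.simple i * z)) :=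
  nilHecke_chevalley_recurrence_general cs αr cor hcor sR hsR hreg Top hTop Tw hTw_mul lam bc
    hbc_fin hbc hindep i w z hw hz

end KMChev
end
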